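/- arXiv:1803.04202 — 3 statements merged into one kernel-verified Lean document; each statement's English description precedes it below -/
import Mathlib

section
/- Let G be a group such that every element of G has finitely many conjugates, with |x^G| ≤ m for all x ∈ G. Then the commutator subgroup G' is finite, of order bounded by a function of m only. -/
/-!
Let `A = a^G` be a conjugacy class of maximal size and pick `g_y` with `y = g_y a g_y⁻¹` for
each `y ∈ A`; the intersection `C` of the centralizers of the `g_y` has index at most `m ^ m`.
For `c ∈ C` the elements `c y = g_y (c a) g_y⁻¹` are `|A|` distinct conjugates of `c a`, so by
maximality they exhaust its class. Hence `c⁻¹ (g c g⁻¹) = y (g a g⁻¹)⁻¹ ∈ A / A` for every `g`: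
`C` is central modulo `N = ⟨A / A⟩`, and Schur's theorem bounds the derived subgroup of `G ⧸ N`.

`A / A` is a conjugation-invariant set of at most `m ^ 2` commutators, so `N` is normal. It is
finite: its centre has index at most `m ^ (m ^ 2)`, so Schur bounds `N'`, and `N ⧸ N'` is
abelian, generated by `m ^ 2` elements of order dividing `(m ^ 2)!`, since the transfer of
`⟨u, v⟩` into its centre is `g ↦ g ^ k` with `k ≤ m ^ 2`, and it kills `⁅u, v⁆`.
-/

open Subgroup
open scoped commutatorElement Pointwise

section

variable {G : Type*} [Group G]

theorem natCard_conjugatesOf (x : G) : Nat.card (conjugatesOf x) = (centralizer {x}).index := by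
  rw [centralizer_eq_comap_stabilizer]
  refine ((index_comap_of_surjective (G := ConjAct G) (G' := G)
    (H := MulAction.stabilizer (ConjAct G) x) ConjAct.toConjAct.surjective).trans ?_).symm
  rw [MulAction.index_stabilizer]
  congr
  ext y
  exact ConjAct.mem_orbit_conjAct.trans isConj_comm

theorem commutatorElement_mul_mem_center {u v z w : G} (hz : z ∈ center G)
    (hw : w ∈ center G) : ⁅u * z, v * w⁆ = ⁅u, v⁆ := by
  have hzc : Commute z (v * w) := (mem_center_iff.mp hz _).symm
  have hwc : Commute w u⁻¹ := (mem_center_iff.mp hw _).symm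
  calc ⁅u * z, v * w⁆ = u * (z * (v * w) * z⁻¹) * u⁻¹ * (v * w)⁻¹ := by group
    _ = u * v * (w * u⁻¹ * w⁻¹) * v⁻¹ := by rw [hzc.mul_inv_cancel]; group
    _ = ⁅u, v⁆ := by rw [hwc.mul_inv_cancel]; group

theorem commutatorSet_subset_range_out :
    commutatorSet G ⊆
      Set.range fun q : (G ⧸ center G) × (G ⧸ center G) => ⁅q.1.out, q.2.out⁆ := by
  rintro _ ⟨u, v, rfl⟩
  obtain ⟨z, hz⟩ := QuotientGroup.mk_out_eq_mul (center G) u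
  obtain ⟨w, hw⟩ := QuotientGroup.mk_out_eq_mul (center G) v
  exact ⟨(u, v), by simp only [hz, hw]; exact commutatorElement_mul_mem_center z.2 w.2⟩

-- `cardCommutatorBound` takes the number of commutators, at most `c ^ 2` if `[G : Z(G)] = c`.
def schurBound (c : ℕ) : ℕ := (Finset.range (c ^ 2 + 1)).sup cardCommutatorBound

theorem finite_commutator_and_natCard_le_schurBound {c : ℕ} (h0 : (center G).index ≠ 0)
    (hc : (center G).index ≤ c) :
    Finite (commutator G) ∧ Nat.card (commutator G) ≤ schurBound c := by
  have : FiniteIndex (center G) := ⟨h0⟩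
  have hsub := commutatorSet_subset_range_out (G := G)
  have : Finite (commutatorSet G) := (Set.finite_range _).subset hsub
  refine ⟨inferInstance,
    (card_commutator_le_of_finite_commutatorSet G).trans (Finset.le_sup ?_)⟩
  rw [Finset.mem_range, Nat.lt_succ_iff]
  calc Nat.card (commutatorSet G) ≤ Nat.card (Set.range _) :=
        Nat.card_mono (Set.finite_range _) hsub
    _ ≤ Nat.card ((G ⧸ center G) × (G ⧸ center G)) := Finite.card_range_le _
    _ = (center G).index ^ 2 := by rw [Nat.card_prod, sq]; rfl
    _ ≤ c ^ 2 := Nat.pow_le_pow_left hc 2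

theorem index_center_quotient_le {N C : Subgroup G} [N.Normal] (hC0 : C.index ≠ 0)
    (hC : ∀ c ∈ C, ∀ g : G, c⁻¹ * (g * c * g⁻¹) ∈ N) :
    (center (G ⧸ N)).index ≠ 0 ∧ (center (G ⧸ N)).index ≤ C.index := by
  have hle : C ≤ (center (G ⧸ N)).comap (QuotientGroup.mk' N) := by
    intro c hc
    rw [mem_comap, mem_center_iff]
    intro q
    obtain ⟨g, rfl⟩ := QuotientGroup.mk_surjective q
    have h : ((g * c * g⁻¹ : G) : G ⧸ N) = c := (QuotientGroup.eq.mpr (hC c hc g)).symm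
    rw [QuotientGroup.mk_mul, QuotientGroup.mk_mul, QuotientGroup.mk_inv] at h
    exact mul_inv_eq_iff_eq_mul.mp h
  have hdvd := index_comap_of_surjective (center (G ⧸ N)) (QuotientGroup.mk'_surjective N) ▸
    index_dvd_of_le hle
  exact ⟨ne_zero_of_dvd_ne_zero hC0 hdvd, Nat.le_of_dvd (Nat.pos_of_ne_zero hC0) hdvd⟩

theorem finite_commutator_and_natCard_le_mul (N : Subgroup G) [N.Normal] [Finite N]
    [Finite (commutator (G ⧸ N))] :
    Finite (commutator G) ∧
      Nat.card (commutator G) ≤ Nat.card N * Nat.card (commutator (G ⧸ N)) := by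
  have hle : commutator G ≤ (commutator (G ⧸ N)).comap (QuotientGroup.mk' N) :=
    commutator_le.mpr fun g₁ _ g₂ _ => by
      rw [mem_comap, map_commutatorElement]
      exact commutator_mem_commutator (mem_top _) (mem_top _)
  have hcard : Nat.card ((commutator (G ⧸ N)).comap (QuotientGroup.mk' N)) =
      Nat.card N * Nat.card (commutator (G ⧸ N)) :=
    QuotientGroup.card_preimage_mk N (commutator (G ⧸ N) : Set (G ⧸ N))
  have : Finite ((commutator (G ⧸ N)).comap (QuotientGroup.mk' N)) :=
    Nat.finite_of_card_ne_zero (hcard ▸ Nat.mul_ne_zero Nat.card_pos.ne' Nat.card_pos.ne')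
  exact ⟨Finite.of_injective _ (inclusion_injective hle), hcard ▸ card_le_of_le hle⟩

theorem natCard_abelianization_closure_le {Y : Set G} [Finite Y] {L : ℕ} (hL : 0 < L)
    (hY : ∀ y ∈ Y, y ^ L = 1) :
    Finite (Abelianization (closure Y)) ∧
      Nat.card (Abelianization (closure Y)) ≤ L ^ Nat.card Y := by
  have hgen : closure ((closure Y).subtype ⁻¹' Y) ≤
      (powMonoidHom L : Abelianization (closure Y) →* _).ker.comap Abelianization.of := by
    rw [closure_le]
    intro y hy
    have : y ^ L = 1 := Subtype.ext (hY _ hy)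
    simp [← map_pow, this]
  have hexp : ∀ z : Abelianization (closure Y), z ^ L = 1 := by
    rintro ⟨y⟩
    exact hgen (by rw [closure_preimage_eq_top]; exact mem_top y)
  have : Group.FG (Abelianization (closure Y)) :=
    Group.fg_of_surjective (QuotientGroup.mk'_surjective _)
  have hdvd := (card_dvd_exponent_pow_rank' _ hexp).trans (pow_dvd_pow L
    ((Group.rank_le_of_surjective _ (QuotientGroup.mk'_surjective _)).trans
      (rank_closure_finite_le_nat_card Y)))
  have hpos : 0 < L ^ Nat.card Y := pow_pos hL _
  exact ⟨Nat.finite_of_card_ne_zero (ne_zero_of_dvd_ne_zero hpos.ne' hdvd),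
    Nat.le_of_dvd hpos hdvd⟩

theorem div_conjugatesOf_subset_commutatorSet (a : G) :
    conjugatesOf a / conjugatesOf a ⊆ commutatorSet G := by
  rintro _ ⟨_, hu, _, hv, rfl⟩
  obtain ⟨g, rfl⟩ := isConj_iff.mp hu
  obtain ⟨h, rfl⟩ := isConj_iff.mp hv
  refine ⟨g * h⁻¹, h * a * h⁻¹, ?_⟩
  simp only [commutatorElement_def, div_eq_mul_inv]
  group

theorem normalClosure_div_conjugatesOf (a : G) :
    normalClosure (conjugatesOf a / conjugatesOf a) =
      closure (conjugatesOf a / conjugatesOf a) := by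
  refine congrArg Subgroup.closure (subset_antisymm ?_ Group.subset_conjugatesOfSet)
  intro x hx
  obtain ⟨_, ⟨u, hu, v, hv, rfl⟩, hconj⟩ := Group.mem_conjugatesOfSet_iff.mp hx
  obtain ⟨g, rfl⟩ := isConj_iff.mp hconj
  exact ⟨g * u * g⁻¹, IsConj.trans hu (isConj_iff.mpr ⟨g, rfl⟩), g * v * g⁻¹,
    IsConj.trans hv (isConj_iff.mpr ⟨g, rfl⟩), by simp only [div_eq_mul_inv]; group⟩

theorem inv_mul_conj_mem_div_of_smul_subset {a c : G} (hfin : (conjugatesOf (c * a)).Finite)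
    (hmax : Nat.card (conjugatesOf (c * a)) ≤ Nat.card (conjugatesOf a))
    (hc : c • conjugatesOf a ⊆ conjugatesOf (c * a)) (g : G) :
    c⁻¹ * (g * c * g⁻¹) ∈ conjugatesOf a / conjugatesOf a := by
  have heq : c • conjugatesOf a = conjugatesOf (c * a) := by
    refine Set.eq_of_subset_of_ncard_le hc ?_ hfin
    rwa [Set.ncard_smul_set, ← Nat.card_coe_set_eq, ← Nat.card_coe_set_eq]
  have hmem : g * (c * a) * g⁻¹ ∈ c • conjugatesOf a := heq ▸ isConj_iff.mpr ⟨g, rfl⟩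
  obtain ⟨y, hy, hcy⟩ := Set.mem_smul_set.mp hmem
  refine ⟨y, hy, g * a * g⁻¹, isConj_iff.mpr ⟨g, rfl⟩, ?_⟩
  show y / (g * a * g⁻¹) = _
  rw [div_eq_mul_inv, eq_inv_mul_of_mul_eq hcy]
  group

/-- Every conjugacy class of `G` has at most `m` elements: the class of `x` has
`(centralizer {x}).index` elements by `natCard_conjugatesOf`. -/
def BoundedConjClasses (G : Type*) [Group G] (m : ℕ) : Prop :=
  ∀ x : G, (centralizer {x}).index ≠ 0 ∧ (centralizer {x}).index ≤ m

def neumannBound (m : ℕ) : ℕ :=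
  (m ^ 2).factorial ^ (m ^ 2) * schurBound (m ^ (m ^ 2)) * schurBound (m ^ m)

namespace BoundedConjClasses

variable {m : ℕ}

theorem of_conjugatesOf
    (h : ∀ x : G, (conjugatesOf x).Finite ∧ Nat.card (conjugatesOf x) ≤ m) :
    BoundedConjClasses G m := fun x => by
  have := (h x).1.to_subtype
  have : Nonempty (conjugatesOf x) := ⟨⟨x, mem_conjugatesOf_self⟩⟩
  rw [← natCard_conjugatesOf]
  exact ⟨Nat.card_pos.ne', (h x).2⟩

theorem finite_conjugatesOf (hG : BoundedConjClasses G m) (x : G) : (conjugatesOf x).Finite :=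
  Set.finite_coe_iff.mp (Nat.finite_of_card_ne_zero ((natCard_conjugatesOf x).trans_ne (hG x).1))

theorem natCard_conjugatesOf_le (hG : BoundedConjClasses G m) (x : G) :
    Nat.card (conjugatesOf x) ≤ m :=
  (natCard_conjugatesOf x).trans_le (hG x).2

theorem one_le (hG : BoundedConjClasses G m) : 1 ≤ m :=
  (Nat.pos_of_ne_zero (hG 1).1).trans_le (hG 1).2

theorem subgroup (hG : BoundedConjClasses G m) (H : Subgroup G) : BoundedConjClasses H m := by
  intro x
  have : FiniteIndex (centralizer {(x : G)}) := ⟨(hG x).1⟩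
  have hx : centralizer {x} = (centralizer {(x : G)}).subgroupOf H := by
    ext y
    simp [mem_subgroupOf, mem_centralizer_singleton_iff, Subtype.ext_iff]
  rw [hx]
  refine ⟨FiniteIndex.index_ne_zero, (relIndex_le_of_le_right le_top ?_).trans ?_⟩
  all_goals rw [relIndex_top_right]
  exacts [(hG x).1, (hG x).2]

theorem index_center_le (hG : BoundedConjClasses G m) {S : Set G} [Finite S]
    (hS : closure S = ⊤) : (center G).index ≠ 0 ∧ (center G).index ≤ m ^ Nat.card S := by
  have := Fintype.ofFinite S
  rw [center_eq_infi' hS]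
  refine ⟨index_iInf_ne_zero fun g => (hG g).1, (index_iInf_le _).trans ?_⟩
  calc ∏ g : S, (centralizer {(g : G)}).index ≤ ∏ _g : S, m :=
        Finset.prod_le_prod' fun g _ => (hG g).2
    _ = m ^ Nat.card S := by rw [Finset.prod_const, Finset.card_univ, Nat.card_eq_fintype_card]

theorem index_center_closure_le (hG : BoundedConjClasses G m) (S : Set G) [Finite S] :
    (center (closure S)).index ≠ 0 ∧ (center (closure S)).index ≤ m ^ Nat.card S := by
  have hinj : Function.Injective fun p : (closure S).subtype ⁻¹' S => (⟨p.1.1, p.2⟩ : S) :=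
    fun _ _ h => Subtype.ext (Subtype.ext (congrArg (Subtype.val : S → G) h))
  have := Finite.of_injective _ hinj
  obtain ⟨h0, hle⟩ := (hG.subgroup (closure S)).index_center_le (closure_preimage_eq_top S)
  exact ⟨h0, hle.trans (Nat.pow_le_pow_right hG.one_le (Nat.card_le_card_of_injective _ hinj))⟩

open scoped IsMulCommutative in
theorem commutatorElement_pow_factorial_eq_one (hG : BoundedConjClasses G m) (u v : G) :
    ⁅u, v⁆ ^ (m ^ 2).factorial = 1 := by
  set P := closure ({u, v} : Set G)
  obtain ⟨h0, hle⟩ := hG.index_center_closure_le {u, v}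
  have : FiniteIndex (center P) := ⟨h0⟩
  have hker := Abelianization.commutator_subset_ker (MonoidHom.transferCenterPow P)
    (commutator_mem_commutator (mem_top (⟨u, subset_closure (by simp)⟩ : P))
      (mem_top (⟨v, subset_closure (by simp)⟩ : P)))
  have hpow : ⁅u, v⁆ ^ (center P).index = 1 := by
    rw [MonoidHom.mem_ker, Subtype.ext_iff, MonoidHom.transferCenterPow_apply] at hker
    have h := congrArg Subtype.val hker
    rw [SubgroupClass.coe_pow, OneMemClass.coe_one] at h
    exact h
  have hpair : Nat.card ({u, v} : Set G) ≤ 2 := by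
    rw [Nat.card_coe_set_eq]
    exact (Set.ncard_insert_le _ _).trans (by rw [Set.ncard_singleton])
  refine orderOf_dvd_iff_pow_eq_one.mp ((orderOf_dvd_of_pow_eq_one hpow).trans
    (Nat.dvd_factorial (Nat.pos_of_ne_zero h0) (hle.trans ?_)))
  exact Nat.pow_le_pow_right hG.one_le hpair

theorem finite_closure_and_natCard_le (hG : BoundedConjClasses G m) {Y : Set G} [Finite Y]
    (hY : Y ⊆ commutatorSet G) {s : ℕ} (hs : Nat.card Y ≤ s) :
    Finite (closure Y) ∧ Nat.card (closure Y) ≤ (m ^ 2).factorial ^ s * schurBound (m ^ s) := by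
  obtain ⟨h0, hle⟩ := hG.index_center_closure_le Y
  obtain ⟨_, hcomm⟩ := finite_commutator_and_natCard_le_schurBound h0
    (hle.trans (Nat.pow_le_pow_right hG.one_le hs))
  obtain ⟨_, hab⟩ := natCard_abelianization_closure_le (Nat.factorial_pos _) fun y hy => by
    obtain ⟨u, v, rfl⟩ := hY hy
    exact hG.commutatorElement_pow_factorial_eq_one u v
  have hcard : Nat.card (closure Y) =
      Nat.card (Abelianization (closure Y)) * Nat.card (commutator (closure Y)) :=
    card_eq_card_quotient_mul_card_subgroup _
  have hab' := hab.trans (Nat.pow_le_pow_right (Nat.factorial_pos _) hs)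
  exact ⟨Nat.finite_of_card_ne_zero (hcard ▸ Nat.mul_ne_zero Nat.card_pos.ne' Nat.card_pos.ne'),
    hcard ▸ Nat.mul_le_mul hab' hcomm⟩

theorem exists_subgroup_forall_inv_mul_conj_mem (hG : BoundedConjClasses G m) :
    ∃ a : G, ∃ C : Subgroup G, C.index ≠ 0 ∧ C.index ≤ m ^ m ∧
      ∀ c ∈ C, ∀ g : G, c⁻¹ * (g * c * g⁻¹) ∈ conjugatesOf a / conjugatesOf a := by
  have hbdd : BddAbove (Set.range fun x : G => Nat.card (conjugatesOf x)) :=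
    ⟨m, by rintro _ ⟨x, rfl⟩; exact hG.natCard_conjugatesOf_le x⟩
  obtain ⟨a, ha⟩ := Nat.sSup_mem (Set.range_nonempty _) hbdd
  have hmax (x : G) : Nat.card (conjugatesOf x) ≤ Nat.card (conjugatesOf a) :=
    (le_csSup hbdd ⟨x, rfl⟩).trans_eq ha.symm
  have := (hG.finite_conjugatesOf a).fintype
  choose g hg using fun y : conjugatesOf a => isConj_iff.mp y.2
  refine ⟨a, ⨅ y, centralizer {g y}, index_iInf_ne_zero fun y => (hG _).1, ?_, fun c hc => ?_⟩
  · calc (⨅ y, centralizer {g y}).index ≤ ∏ y, (centralizer {g y}).index := index_iInf_le _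
      _ ≤ ∏ _y : conjugatesOf a, m := Finset.prod_le_prod' fun y _ => (hG _).2
      _ = m ^ Nat.card (conjugatesOf a) := by
        rw [Finset.prod_const, Finset.card_univ, Nat.card_eq_fintype_card]
      _ ≤ m ^ m := Nat.pow_le_pow_right hG.one_le (hG.natCard_conjugatesOf_le a)
  · refine inv_mul_conj_mem_div_of_smul_subset (hG.finite_conjugatesOf _) (hmax _) ?_
    rintro _ ⟨y, hy, rfl⟩
    set t := g ⟨y, hy⟩
    have hct : c * t = t * c := mem_centralizer_singleton_iff.mp (mem_iInf.mp hc ⟨y, hy⟩)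
    refine isConj_iff.mpr ⟨t, ?_⟩
    calc t * (c * a) * t⁻¹ = c * (t * a * t⁻¹) := by rw [← mul_assoc, ← hct]; group
      _ = c * y := congrArg (c * ·) (hg ⟨y, hy⟩)

theorem finite_commutator_and_natCard_le (hG : BoundedConjClasses G m) :
    Finite (commutator G) ∧ Nat.card (commutator G) ≤ neumannBound m := by
  obtain ⟨a, C, hC0, hCm, hC⟩ := hG.exists_subgroup_forall_inv_mul_conj_mem
  set D := conjugatesOf a / conjugatesOf a
  have := ((hG.finite_conjugatesOf a).div (hG.finite_conjugatesOf a)).to_subtype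
  have hD : Nat.card D ≤ m ^ 2 := Set.natCard_div_le.trans
    (sq m ▸ Nat.mul_le_mul (hG.natCard_conjugatesOf_le a) (hG.natCard_conjugatesOf_le a))
  obtain ⟨hNfin, hNcard⟩ :=
    hG.finite_closure_and_natCard_le (div_conjugatesOf_subset_commutatorSet a) hD
  rw [← normalClosure_div_conjugatesOf] at hNfin hNcard
  obtain ⟨hZ0, hZ⟩ :=
    index_center_quotient_le hC0 fun c hc g => subset_normalClosure (hC c hc g)
  obtain ⟨_, hQcard⟩ := finite_commutator_and_natCard_le_schurBound hZ0 (hZ.trans hCm)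
  obtain ⟨hfin, hcard⟩ := finite_commutator_and_natCard_le_mul (normalClosure D)
  exact ⟨hfin, hcard.trans (Nat.mul_le_mul hNcard hQcard)⟩

end BoundedConjClasses

end

/-- B. H. Neumann's theorem: a BFC-group with classes of size at most `m` has
derived subgroup of `m`-bounded finite order. -/
theorem stmt_1 :
    ∃ f : ℕ → ℕ, ∀ (m : ℕ) (G : Type*) [Group G],
      (∀ x : G, ({y : G | ∃ g : G, g * x * g⁻¹ = y}).Finite ∧
        Nat.card {y : G | ∃ g : G, g * x * g⁻¹ = y} ≤ m) →
      0 < Nat.card (commutator G) ∧ Nat.card (commutator G) ≤ f m := by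
  refine ⟨neumannBound, fun m G _ hG => ?_⟩
  have hconj (x : G) : {y : G | ∃ g : G, g * x * g⁻¹ = y} = conjugatesOf x :=
    Set.ext fun _ => isConj_iff.symm
  have hBFC : BoundedConjClasses G m := .of_conjugatesOf fun x => hconj x ▸ hG x
  obtain ⟨_, hcard⟩ := hBFC.finite_commutator_and_natCard_le
  exact ⟨Nat.card_pos, hcard⟩
end

section
/- Let w = w(x₁,…,x_n) be a multilinear commutator word and H a normal subgroup of a group G. Given g₁,…,g_n ∈ G, h ∈ H and an index s ∈ {1,…,n}, there exist elements yⱼ ∈ gⱼ^H (the H-conjugacy class of gⱼ) for j = 1,…,n such that w(g₁,…,g_{s-1}, g_s h, g_{s+1},…,g_n) = w(y₁,…,y_n) · w(g₁,…,g_{s-1}, h, g_{s+1},…,g_n). -/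
/-!
Induction on the word. For `w = [u, v]` with `s` among the variables of `u`, the induction
hypothesis gives `u(…, g_s h, …) = u(y) c` with `c = u(…, h, …) ∈ H`, and
`[u(y) c, V] = [u(y), c V c⁻¹] [c, V]`, where `c V c⁻¹` is the value of `v` at the `c`-conjugates
of its arguments. When `s` is among the variables of `v`, `[U, v(y) c] = [U, c] [c U c⁻¹, v(y)]`,
and moving `[U, c] ∈ H` to the right conjugates the first factor by an element of `H`.
-/

/-- Multilinear commutator words (outer commutator words) on `n` (pairwise
distinct) variables: the single variable is one, and the commutator of two
multilinear commutator words in disjoint variables is one. -/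
inductive MlWord : ℕ → Type
  | var : MlWord 1
  | comm : ∀ {a b : ℕ}, MlWord a → MlWord b → MlWord (a + b)

open scoped commutatorElement

/-- Evaluation of a multilinear commutator word at a tuple of group elements. -/
def MlWord.eval {G : Type*} [Group G] : ∀ {n : ℕ}, MlWord n → (Fin n → G) → G
  | _, .var, g => g 0
  | _, .comm u v, g =>
      ⁅u.eval fun i => g (Fin.castAdd _ i), v.eval fun i => g (Fin.natAdd _ i)⁆

namespace Fin

variable {α : Type*} {m n : ℕ}

theorem update_append_castAdd (x : Fin m → α) (y : Fin n → α) (i : Fin m) (a : α) :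
    Function.update (append x y) (castAdd n i) a = append (Function.update x i a) y := by
  ext j
  induction j using addCases with
  | left j => simp [Function.update_apply, castAdd_inj]
  | right j => simp [Function.update_apply, Fin.ext_iff]; omega

theorem update_append_natAdd (x : Fin m → α) (y : Fin n → α) (i : Fin n) (a : α) :
    Function.update (append x y) (natAdd m i) a = append x (Function.update y i a) := by
  ext j
  induction j using addCases with
  | left j => simp [Function.update_apply, Fin.ext_iff]; omega
  | right j => simp [Function.update_apply, natAdd_inj]

end Fin

section

variable {G : Type*} [Group G]

theorem commutatorElement_mul_left_eq_conj_right_mul (x c z : G) :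
    ⁅x * c, z⁆ = ⁅x, c * z * c⁻¹⁆ * ⁅c, z⁆ := by
  simp [mul_assoc, commutatorElement_def]

theorem commutatorElement_mul_right_eq_mul_conj_left (x y c : G) :
    ⁅x, y * c⁆ = ⁅x, c⁆ * ⁅c * x * c⁻¹, y⁆ := by
  simp [mul_assoc, commutatorElement_def]

namespace Subgroup

variable {H : Subgroup G} [H.Normal] {x : G}

theorem commutatorElement_mem_left (hx : x ∈ H) (y : G) : ⁅x, y⁆ ∈ H :=
  commutator_le_left H ⊤ <| commutator_mem_commutator hx (mem_top y)

theorem commutatorElement_mem_right (hx : x ∈ H) (y : G) : ⁅y, x⁆ ∈ H :=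
  commutator_le_right ⊤ H <| commutator_mem_commutator (mem_top y) hx

end Subgroup

-- `y ∈ x^H` in the notation of the paper.
def SubgroupConj (H : Subgroup G) (x y : G) : Prop := ∃ k ∈ H, k⁻¹ * x * k = y

namespace SubgroupConj

variable {H : Subgroup G} {x y z k : G}

theorem refl (x : G) : SubgroupConj H x x := ⟨1, H.one_mem, by group⟩

theorem of_mem (hk : k ∈ H) (x : G) : SubgroupConj H x (k * x * k⁻¹) :=
  ⟨k⁻¹, inv_mem hk, by group⟩

theorem trans : SubgroupConj H x y → SubgroupConj H y z → SubgroupConj H x z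
  | ⟨k, hk, hy⟩, ⟨l, hl, hz⟩ => ⟨k * l, mul_mem hk hl, by rw [← hz, ← hy]; group⟩

end SubgroupConj

namespace MlWord

theorem eval_comm_append {a b : ℕ} (u : MlWord a) (v : MlWord b) (x : Fin a → G)
    (y : Fin b → G) : (comm u v).eval (Fin.append x y) = ⁅u.eval x, v.eval y⁆ := by
  simp [eval]

theorem eval_conj {n : ℕ} (w : MlWord n) (g : Fin n → G) (k : G) :
    w.eval (fun i => k * g i * k⁻¹) = k * w.eval g * k⁻¹ := by
  induction w with
  | var => rfl
  | comm u v ihu ihv =>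
    simp only [eval, ihu, ihv]
    exact (conjugate_commutatorElement _ _ k).symm

theorem eval_mem {H : Subgroup G} [H.Normal] {n : ℕ} (w : MlWord n) (g : Fin n → G)
    (s : Fin n) (hs : g s ∈ H) : w.eval g ∈ H := by
  induction w with
  | var => rwa [Subsingleton.elim s 0] at hs
  | @comm a b u v ihu ihv =>
    induction s using Fin.addCases with
    | left i => exact Subgroup.commutatorElement_mem_left (ihu _ i hs) _
    | right i => exact Subgroup.commutatorElement_mem_right (ihv _ i hs) _

variable (H : Subgroup G) {n : ℕ}

def UpdateMulSplits (w : MlWord n) (g : Fin n → G) (s : Fin n) (h : G) : Prop :=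
  ∃ y : Fin n → G, (∀ j, SubgroupConj H (g j) (y j)) ∧
    w.eval (Function.update g s (g s * h)) = w.eval y * w.eval (Function.update g s h)

theorem updateMulSplits_var (g : Fin 1 → G) (s : Fin 1) (h : G) :
    UpdateMulSplits H var g s h := by
  obtain rfl : s = 0 := Subsingleton.elim _ _
  exact ⟨g, fun j => SubgroupConj.refl (g j), by simp [eval]⟩

variable {H} [H.Normal] {a b : ℕ} {h : G}

theorem UpdateMulSplits.comm_castAdd {u : MlWord a} {x : Fin a → G} {i : Fin a} (hh : h ∈ H)
    (hu : UpdateMulSplits H u x i h) (v : MlWord b) (y : Fin b → G) :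
    UpdateMulSplits H (comm u v) (Fin.append x y) (Fin.castAdd b i) h := by
  obtain ⟨x', hx', hux'⟩ := hu
  set c := u.eval (Function.update x i h)
  have hc : c ∈ H := u.eval_mem _ i (by simpa using hh)
  refine ⟨Fin.append x' fun j => c * y j * c⁻¹, ?_, ?_⟩
  · simp only [Fin.forall_fin_add, Fin.append_left, Fin.append_right]
    exact ⟨hx', fun j => SubgroupConj.of_mem hc (y j)⟩
  · simp only [Fin.append_left, Fin.update_append_castAdd, eval_comm_append]
    rw [hux', eval_conj, commutatorElement_mul_left_eq_conj_right_mul]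

theorem UpdateMulSplits.comm_natAdd {v : MlWord b} {y : Fin b → G} {i : Fin b} (hh : h ∈ H)
    (hv : UpdateMulSplits H v y i h) (u : MlWord a) (x : Fin a → G) :
    UpdateMulSplits H (comm u v) (Fin.append x y) (Fin.natAdd a i) h := by
  obtain ⟨y', hy', hvy'⟩ := hv
  set c := v.eval (Function.update y i h)
  have hc : c ∈ H := v.eval_mem _ i (by simpa using hh)
  set k := ⁅u.eval x, c⁆
  have hk : k ∈ H := Subgroup.commutatorElement_mem_right hc _
  refine ⟨Fin.append (fun j => k * (c * x j * c⁻¹) * k⁻¹) fun j => k * y' j * k⁻¹, ?_, ?_⟩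
  · simp only [Fin.forall_fin_add, Fin.append_left, Fin.append_right]
    exact ⟨fun j => (SubgroupConj.of_mem hc (x j)).trans (.of_mem hk _),
      fun j => SubgroupConj.trans (hy' j) (.of_mem hk _)⟩
  · simp only [Fin.append_right, Fin.update_append_natAdd, eval_comm_append]
    rw [hvy', eval_conj, eval_conj, eval_conj, commutatorElement_mul_right_eq_mul_conj_left,
      ← conjugate_commutatorElement]
    exact (inv_mul_cancel_right _ _).symm

end MlWord

end

/-- Lemma 2.4 of [DMS-revised]: replacing `g_s` by `g_s h` with `h ∈ H ⊴ G`
changes the `w`-value by a `w`-value on `H`-conjugates of the `g_j`. -/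
theorem stmt_6 {G : Type*} [Group G] {n : ℕ} (w : MlWord n) (H : Subgroup G)
    [H.Normal] (g : Fin n → G) (h : G) (hh : h ∈ H) (s : Fin n) :
    ∃ y : Fin n → G, (∀ j, ∃ k ∈ H, k⁻¹ * g j * k = y j) ∧
      w.eval (Function.update g s (g s * h)) =
        w.eval y * w.eval (Function.update g s h) := by
  show MlWord.UpdateMulSplits H w g s h
  induction w with
  | var => exact MlWord.updateMulSplits_var H g s h
  | @comm a b u v ihu ihv =>
    rw [← Fin.append_castAdd_natAdd (f := g)]
    induction s using Fin.addCases with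
    | left i => exact (ihu _ i).comm_castAdd hh v _
    | right i => exact (ihv _ i).comm_natAdd hh u _
end

section
/- Let w = w(x₁,…,x_n) be a multilinear commutator word, I ⊆ {1,…,n}, and M a normal subgroup of a group K. Assume w_J(K; M) = 1 for every proper subset J ⊊ I (i.e., every w-value whose arguments lie in K at positions in J and in M elsewhere is trivial). Then for any elements kᵢ ∈ K (i ∈ I) and mⱼ ∈ M (j ∈ {1,…,n}), one has w_I(kᵢmᵢ; m_l) = w_I(kᵢ; m_l), i.e., the value of w with arguments kᵢmᵢ at positions i ∈ I and m_l at positions l ∉ I equals the value with arguments kᵢ at positions in I and m_l elsewhere. -/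
open scoped commutatorElement

/-! Induction on `w`, simultaneously for all groups. For `w = [u, v]`, the hypothesis says that
a value of `u` with one position of `I` moved into `M` commutes with every value of `v` whose
arguments outside `I` lie in `M`, and symmetrically. The induction hypothesis for `u`, applied in
the quotient by the centralizer `C` of those values of `v`, gives `u(kᵢmᵢ) ∈ u(kᵢ) C`, and the
factor from `C` drops out of the commutator; likewise for `v`. -/

universe u

open Function Subgroup

theorem Fin.castAdd_ne_natAdd {a b : ℕ} (i : Fin a) (j : Fin b) :
    Fin.castAdd b i ≠ Fin.natAdd a j := by
  rw [Ne, Fin.ext_iff, Fin.val_castAdd, Fin.val_natAdd]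
  omega

theorem Set.exists_ssubset_of_ssubset_preimage {α β γ : Type*} {f : α → γ} {g : β → γ}
    (hf : Injective f) (hfg : ∀ a b, f a ≠ g b) {I : Set γ} {J₀ : Set α}
    (hJ₀ : J₀ ⊂ f ⁻¹' I) : ∃ J ⊂ I, J₀ ⊆ f ⁻¹' J ∧ g ⁻¹' I ⊆ g ⁻¹' J := by
  obtain ⟨a₀, ha₀I, ha₀J₀⟩ := Set.exists_of_ssubset hJ₀
  refine ⟨I \ {f a₀}, Set.sdiff_singleton_ssubset.mpr ha₀I, fun a ha => ⟨hJ₀.subset ha, ?_⟩,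
    fun b hb => ⟨hb, (hfg a₀ b).symm⟩⟩
  exact hf.ne (ne_of_mem_of_not_mem ha ha₀J₀)

theorem Subgroup.normal_centralizer_of_conj_mem {G : Type*} [Group G] {s : Set G}
    (hs : ∀ g, ∀ x ∈ s, g * x * g⁻¹ ∈ s) : (centralizer s).Normal where
  conj_mem z hz g x hx := by
    simpa [-mul_left_inj, -mul_right_inj, mul_assoc]
      using congr(g * $(hz _ (hs g⁻¹ x hx)) * g⁻¹)

theorem commutatorElement_mul_left_of_commute {G : Type*} [Group G] {z b : G}
    (h : Commute z b) (a : G) : ⁅a * z, b⁆ = ⁅a, b⁆ := by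
  rw [commutatorElement_mul_left_eq_conj_mul, commutatorElement_eq_one_iff_commute.mpr h]
  group

theorem commutatorElement_mul_right_of_commute {G : Type*} [Group G] {a z : G}
    (h : Commute a z) (b : G) : ⁅a, b * z⁆ = ⁅a, b⁆ := by
  rw [commutatorElement_mul_right_eq_mul_conj, commutatorElement_eq_one_iff_commute.mpr h]
  group

namespace MlWord

section Values

variable {G H : Type*} [Group G] [Group H]

theorem eval_map (f : G →* H) :
    ∀ {n : ℕ} (w : MlWord n) (c : Fin n → G), f (w.eval c) = w.eval fun i => f (c i)
  | _, .var, _ => rfl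
  | _, .comm u v, c => by
    simp only [eval, map_commutatorElement, eval_map f u, eval_map f v]

/-- `w.values J M` is `w_J(G; M)` as a set of values, not the subgroup they generate. -/
def values {n : ℕ} (w : MlWord n) (J : Set (Fin n)) (M : Subgroup G) : Set G :=
  w.eval '' Jᶜ.pi fun _ => (M : Set G)

variable {n : ℕ} {w : MlWord n} {J J' : Set (Fin n)} {M : Subgroup G}

theorem values_mono (h : J ⊆ J') : w.values J M ⊆ w.values J' M :=
  Set.image_mono fun _ hc i hi => hc i fun hiJ => hi (h hiJ)

theorem conj_mem_values [M.Normal] {g : G} (hg : g ∈ w.values J M) (x : G) :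
    x * g * x⁻¹ ∈ w.values J M := by
  obtain ⟨c, hc, rfl⟩ := hg
  refine ⟨fun i => x * c i * x⁻¹, fun i hi => ‹M.Normal›.conj_mem _ (hc i hi) x, ?_⟩
  simpa using (eval_map (MulAut.conj x).toMonoidHom w c).symm

theorem values_map_subset_image {f : G →* H} (hf : Surjective f) :
    w.values J (M.map f) ⊆ f '' w.values J M := by
  rintro _ ⟨c, hc, rfl⟩
  have lift : ∀ i, ∃ x, f x = c i ∧ (i ∉ J → x ∈ M) := by
    intro i
    by_cases hi : i ∈ J
    · obtain ⟨x, hx⟩ := hf (c i)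
      exact ⟨x, hx, absurd hi⟩
    · obtain ⟨x, hxM, hx⟩ := mem_map.mp (hc i hi)
      exact ⟨x, hx, fun _ => hxM⟩
  choose d hd hdM using lift
  refine ⟨w.eval d, ⟨d, hdM, rfl⟩, ?_⟩
  rw [eval_map]
  simp only [hd]

theorem commutatorElement_mem_values {a b : ℕ} {u : MlWord a} {v : MlWord b}
    {J : Set (Fin (a + b))} {g h : G} (hg : g ∈ u.values (Fin.castAdd b ⁻¹' J) M)
    (hh : h ∈ v.values (Fin.natAdd a ⁻¹' J) M) : ⁅g, h⁆ ∈ (comm u v).values J M := by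
  obtain ⟨c₁, hc₁, rfl⟩ := hg
  obtain ⟨c₂, hc₂, rfl⟩ := hh
  refine ⟨Fin.append c₁ c₂, fun i hi => ?_, by simp [eval]⟩
  induction i using Fin.addCases with
  | left i => simpa using hc₁ i hi
  | right j => simpa using hc₂ j hi

section Commutator

variable {a b : ℕ} {u : MlWord a} {v : MlWord b} {I : Set (Fin (a + b))}

theorem commute_of_mem_values (hI : ∀ J ⊂ I, (comm u v).values J M ⊆ {1}) {J : Set (Fin (a + b))}
    (hJ : J ⊂ I) {g h : G} (hg : g ∈ u.values (Fin.castAdd b ⁻¹' J) M)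
    (hh : h ∈ v.values (Fin.natAdd a ⁻¹' J) M) : Commute g h :=
  commutatorElement_eq_one_iff_commute.mp (hI J hJ (commutatorElement_mem_values hg hh))

theorem values_left_subset_centralizer (hI : ∀ J ⊂ I, (comm u v).values J M ⊆ {1})
    {J₁ : Set (Fin a)} (hJ₁ : J₁ ⊂ Fin.castAdd b ⁻¹' I) :
    u.values J₁ M ⊆ centralizer (v.values (Fin.natAdd a ⁻¹' I) M) := by
  obtain ⟨J, hJ, hJ₁J, hIJ⟩ := Set.exists_ssubset_of_ssubset_preimage
    (Fin.castAdd_injective a b) Fin.castAdd_ne_natAdd hJ₁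
  exact fun g hg h hh =>
    (commute_of_mem_values hI hJ (values_mono hJ₁J hg) (values_mono hIJ hh)).symm.eq

theorem values_right_subset_centralizer (hI : ∀ J ⊂ I, (comm u v).values J M ⊆ {1})
    {J₂ : Set (Fin b)} (hJ₂ : J₂ ⊂ Fin.natAdd a ⁻¹' I) :
    v.values J₂ M ⊆ centralizer (u.values (Fin.castAdd b ⁻¹' I) M) := by
  obtain ⟨J, hJ, hJ₂J, hIJ⟩ := Set.exists_ssubset_of_ssubset_preimage
    (Fin.natAdd_injective b a) (fun j i => (Fin.castAdd_ne_natAdd i j).symm) hJ₂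
  exact fun h hh g hg =>
    (commute_of_mem_values hI hJ (values_mono hIJ hg) (values_mono hJ₂J hh)).eq

end Commutator

end Values

/-- `c` and `c'` play the roles of the arguments `(kᵢ; m_l)` and `(kᵢmᵢ; m_l)` of `w_I`. -/
def IsPerturbationInvariant {n : ℕ} (w : MlWord n) : Prop :=
  ∀ (K : Type u) [Group K] (M : Subgroup K) [M.Normal] (I : Set (Fin n)),
    (∀ J ⊂ I, w.values J M ⊆ {1}) →
    ∀ c c' : Fin n → K, (∀ i ∉ I, c i ∈ M ∧ c' i = c i) → (∀ i, (c i)⁻¹ * c' i ∈ M) →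
      w.eval c' = w.eval c

theorem isPerturbationInvariant_var : (var : MlWord 1).IsPerturbationInvariant := by
  intro K _ M _ I hI c c' hcI hcc'
  change c' 0 = c 0
  by_cases h0 : 0 ∈ I
  · have hM : (c 0)⁻¹ * c' 0 ∈ var.values ∅ M := ⟨_, fun i _ => hcc' i, rfl⟩
    exact (inv_mul_eq_one.mp (hI ∅ (Set.empty_ssubset.mpr ⟨0, h0⟩) hM)).symm
  · exact (hcI 0 h0).2

namespace IsPerturbationInvariant

variable {n : ℕ} {w : MlWord n} {K : Type u} [Group K] {M : Subgroup K} [M.Normal]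
  {I : Set (Fin n)} {c c' : Fin n → K}

theorem inv_mul_mem (hw : w.IsPerturbationInvariant.{u}) (C : Subgroup K) [C.Normal]
    (hI : ∀ J ⊂ I, w.values J M ⊆ C) (hcI : ∀ i ∉ I, c i ∈ M ∧ c' i = c i)
    (hcc' : ∀ i, (c i)⁻¹ * c' i ∈ M) : (w.eval c)⁻¹ * w.eval c' ∈ C := by
  set π := QuotientGroup.mk' C
  have hπ : Surjective π := QuotientGroup.mk'_surjective C
  have : (M.map π).Normal := ‹M.Normal›.map π hπ
  rw [← QuotientGroup.eq]
  change π (w.eval c) = π (w.eval c')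
  rw [eval_map, eval_map]
  refine (hw (K ⧸ C) (M.map π) I (fun J hJ => ?_) _ _ (fun i hi => ?_) fun i => ?_).symm
  · refine (values_map_subset_image hπ).trans ?_
    rintro _ ⟨g, hg, rfl⟩
    exact (QuotientGroup.eq_one_iff g).mpr (hI J hJ hg)
  · exact ⟨mem_map_of_mem π (hcI i hi).1, congrArg π (hcI i hi).2⟩
  · rw [← map_inv, ← map_mul]
    exact mem_map_of_mem π (hcc' i)

theorem comm {a b : ℕ} {u : MlWord a} {v : MlWord b} (hu : u.IsPerturbationInvariant.{u})
    (hv : v.IsPerturbationInvariant.{u}) : (comm u v).IsPerturbationInvariant.{u} := by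
  intro K _ M _ I hI c c' hcI hcc'
  set Su := u.values (Fin.castAdd b ⁻¹' I) M
  set Sv := v.values (Fin.natAdd a ⁻¹' I) M
  have : (centralizer Su).Normal :=
    normal_centralizer_of_conj_mem fun x _ hg => conj_mem_values hg x
  have : (centralizer Sv).Normal :=
    normal_centralizer_of_conj_mem fun x _ hg => conj_mem_values hg x
  have hu_mem : (u.eval (c ∘ Fin.castAdd b))⁻¹ * u.eval (c' ∘ Fin.castAdd b) ∈ centralizer Sv :=
    hu.inv_mul_mem _ (fun J hJ => values_left_subset_centralizer hI hJ)
      (fun i hi => hcI _ hi) fun i => hcc' _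
  have hv_mem : (v.eval (c ∘ Fin.natAdd a))⁻¹ * v.eval (c' ∘ Fin.natAdd a) ∈ centralizer Su :=
    hv.inv_mul_mem _ (fun J hJ => values_right_subset_centralizer hI hJ)
      (fun i hi => hcI _ hi) fun i => hcc' _
  have hcSu : u.eval (c ∘ Fin.castAdd b) ∈ Su := ⟨_, fun i hi => (hcI _ hi).1, rfl⟩
  have hc'Sv : v.eval (c' ∘ Fin.natAdd a) ∈ Sv :=
    ⟨_, fun i hi => show c' _ ∈ M from (hcI _ hi).2 ▸ (hcI _ hi).1, rfl⟩
  calc (MlWord.comm u v).eval c'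
      = ⁅u.eval (c' ∘ Fin.castAdd b), v.eval (c' ∘ Fin.natAdd a)⁆ := rfl
    _ = ⁅u.eval (c ∘ Fin.castAdd b), v.eval (c' ∘ Fin.natAdd a)⁆ := by
      rw [← mul_inv_cancel_left (u.eval (c ∘ Fin.castAdd b)) (u.eval (c' ∘ Fin.castAdd b))]
      exact commutatorElement_mul_left_of_commute (mem_centralizer_iff.mp hu_mem _ hc'Sv).symm _
    _ = ⁅u.eval (c ∘ Fin.castAdd b), v.eval (c ∘ Fin.natAdd a)⁆ := by
      rw [← mul_inv_cancel_left (v.eval (c ∘ Fin.natAdd a)) (v.eval (c' ∘ Fin.natAdd a))]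
      exact commutatorElement_mul_right_of_commute (mem_centralizer_iff.mp hv_mem _ hcSu) _

end IsPerturbationInvariant

theorem isPerturbationInvariant : ∀ {n : ℕ} (w : MlWord n), w.IsPerturbationInvariant.{u}
  | _, .var => isPerturbationInvariant_var
  | _, .comm u v => (isPerturbationInvariant u).comm (isPerturbationInvariant v)

end MlWord

/-- Corollary (M2): if `w_J(K; M) = 1` for every proper subset `J ⊊ I`, then
`w_I(kᵢmᵢ; m_l) = w_I(kᵢ; m_l)` for `kᵢ ∈ K`, `mⱼ ∈ M ⊴ K`. -/
theorem stmt_8 {K : Type*} [Group K] {n : ℕ} (w : MlWord n) (I : Finset (Fin n))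
    (M : Subgroup K) [M.Normal]
    (hJ : ∀ J : Finset (Fin n), J ⊂ I →
      ∀ c : Fin n → K, (∀ i ∉ J, c i ∈ M) → w.eval c = 1)
    (k : Fin n → K) (m : Fin n → K) (hm : ∀ j, m j ∈ M) :
    w.eval (fun i => if i ∈ I then k i * m i else m i) =
      w.eval (fun i => if i ∈ I then k i else m i) := by
  refine w.isPerturbationInvariant K M I (fun J hJI => ?_) _ _ (fun i hi => ?_) fun i => ?_
  · rintro _ ⟨c, hc, rfl⟩
    have hJfin := Set.toFinite J
    exact hJ hJfin.toFinset (Set.Finite.toFinset_ssubset.mpr hJI) c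
      fun i hi => hc i (hJfin.mem_toFinset.not.mp hi)
  · simp [Finset.mem_coe.not.mp hi, hm]
  · by_cases hi : i ∈ I <;> simp [hi, hm]
end
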